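/- Let b ≥ 2 be an integer with prime factorization b = p₁^{a₁} p₂^{a₂} ⋯ p_r^{a_r} with r ≥ 2 distinct primes, ordered so that a₁(p₁−1) > a_i(p_i−1) for all i ≥ 2. Then the sequence (ℓ_b(n!))_{n∈ℕ} of last nonzero digits of n! in base b is p₁-automatic. -/

import Mathlib

/-!
Write `b = q * c` with `q = p ^ α` the prime power carrying the strict maximum of `aᵢ (pᵢ - 1)`,
and let `v = v_p(n!)`. By Legendre's formula `v_{pᵢ}(n!) ≈ n / (pᵢ - 1)`, so for large `n` every
other prime power `pᵢ ^ aᵢ` divides `n!` more than `⌊v / α⌋ + 1` times. Hence `v_b(n!) = ⌊v / α⌋`,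
and the last nonzero digit is the residue modulo `b` that vanishes modulo `c` and is
`c ^ (-⌊v / α⌋) * p ^ (v % α) * (n! / p ^ v)` modulo `q`.

Both `v mod α φ(q)` and `n! / p ^ v mod q` are computed from their values at `⌊n / p⌋` and the
last base-`p` digit of `n`: `v(n) = ⌊n / p⌋ + v(⌊n / p⌋)`, and `n! / p ^ v(n)` is
`⌊n / p⌋! / p ^ v(⌊n / p⌋)` times the product of the `j ≤ n` prime to `p`, which modulo `q` depends
only on `n mod q φ(q)`. So a finite automaton reading the base-`p` digits of `n` tracks them.
-/

/-- The state reached after feeding the base-`k` digits of `n`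
(most significant digit first, empty string for `n = 0`) into the
transition function `ρ` starting from state `q₀`. -/
def autoRun {Q : Type} (k : ℕ) (ρ : Q → Fin k → Q) (q₀ : Q) (n : ℕ) : Q :=
  (Nat.digits k n).reverse.foldl (fun q d => if h : d < k then ρ q ⟨d, h⟩ else q) q₀

/-- A sequence `a : ℕ → Δ` is `k`-automatic: some DFAO over the alphabet
`{0, …, k-1}` computes `a n` from the base-`k` digits of `n`
(most significant digit first). -/
def IsAutomatic {Δ : Type*} (k : ℕ) (a : ℕ → Δ) : Prop :=
  ∃ (Q : Type) (_ : Finite Q) (ρ : Q → Fin k → Q) (q₀ : Q) (τ : Q → Δ),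
    ∀ n : ℕ, a n = τ (autoRun k ρ q₀ n)

/-- `lnz b n` is the last nonzero digit of `n` in base `b`:
`(n / b ^ v_b(n)) % b`, where `v_b(n) = padicValNat b n` is the largest `t`
with `b ^ t ∣ n`. -/
def lnz (b n : ℕ) : ℕ := (n / b ^ padicValNat b n) % b

/-- `digSum b n` is the sum of the digits of `n` written in base `b`. -/
def digSum (b n : ℕ) : ℕ := (Nat.digits b n).sum

open Nat Finset

section Automata

variable {k : ℕ}

theorem autoRun_zero {Q : Type} (ρ : Q → Fin k → Q) (q₀ : Q) : autoRun k ρ q₀ 0 = q₀ := by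
  simp [autoRun]

theorem autoRun_of_ne_zero {Q : Type} (hk : 1 < k) (ρ : Q → Fin k → Q) (q₀ : Q) {n : ℕ}
    (hn : n ≠ 0) :
    autoRun k ρ q₀ n = ρ (autoRun k ρ q₀ (n / k)) ⟨n % k, Nat.mod_lt n (by omega)⟩ := by
  rw [autoRun, Nat.digits_def' hk (Nat.pos_of_ne_zero hn), List.reverse_cons,
    List.foldl_append, List.foldl_cons, List.foldl_nil, dif_pos (Nat.mod_lt n (by omega))]
  rfl

theorem isAutomatic_of_digit_rec {S : Type} [Finite S] (hk : 1 < k) (s : ℕ → S)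
    (ρ : S → Fin k → S) (hs : ∀ n ≠ 0, s n = ρ (s (n / k)) ⟨n % k, Nat.mod_lt n (by omega)⟩) :
    IsAutomatic k s := by
  refine ⟨S, inferInstance, ρ, s 0, id, fun n => ?_⟩
  change s n = autoRun k ρ (s 0) n
  induction n using Nat.strong_induction_on with
  | _ n ih =>
    rcases eq_or_ne n 0 with rfl | hn
    · rw [autoRun_zero]
    · rw [autoRun_of_ne_zero hk _ _ hn, ← ih _ (Nat.div_lt_self (by omega) hk), hs n hn]

theorem isAutomatic_min (hk : 1 < k) (N : ℕ) :
    IsAutomatic k (fun n => (⟨min n N, by omega⟩ : Fin (N + 1))) := by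
  refine isAutomatic_of_digit_rec hk _ (fun m d => ⟨min (m * k + d) N, by omega⟩) fun n hn => ?_
  have hn' : n / k * k + n % k = n := Nat.div_add_mod' n k
  have hN : N ≤ N * k := Nat.le_mul_of_pos_right N (by omega)
  have hdiv : n / k ≤ n := Nat.div_le_self n k
  ext
  dsimp only
  rcases le_total (n / k) N with h | h
  · rw [min_eq_left h, hn']
  · rw [min_eq_right h]; omega

namespace IsAutomatic

variable {Δ Δ' : Type*} {a : ℕ → Δ}

theorem map (h : IsAutomatic k a) (f : Δ → Δ') : IsAutomatic k (fun n => f (a n)) := by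
  obtain ⟨Q, hQ, ρ, q₀, τ, hτ⟩ := h
  exact ⟨Q, hQ, ρ, q₀, f ∘ τ, fun n => congrArg f (hτ n)⟩

theorem prodMk (hk : 1 < k) {b : ℕ → Δ'} (ha : IsAutomatic k a) (hb : IsAutomatic k b) :
    IsAutomatic k (fun n => (a n, b n)) := by
  obtain ⟨Q, _, ρ, q₀, τ, hτ⟩ := ha
  obtain ⟨Q', _, ρ', q₀', τ', hτ'⟩ := hb
  have hrun : IsAutomatic k (fun n => (autoRun k ρ q₀ n, autoRun k ρ' q₀' n)) :=
    isAutomatic_of_digit_rec hk _ (fun s d => (ρ s.1 d, ρ' s.2 d)) fun n hn => by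
      rw [autoRun_of_ne_zero hk _ _ hn, autoRun_of_ne_zero hk _ _ hn]
  simpa only [hτ, hτ', Prod.map_apply] using hrun.map (Prod.map τ τ')

theorem congr_of_ge (hk : 1 < k) {a' : ℕ → Δ} (h : IsAutomatic k a) (N : ℕ)
    (h' : ∀ n ≥ N, a' n = a n) : IsAutomatic k a' := by
  have := ((isAutomatic_min hk N).prodMk hk h).map
    fun x => if x.1.val < N then a' x.1 else x.2
  convert this using 2 with n
  dsimp only
  split_ifs with hn
  · rw [min_eq_left (by omega)]
  · exact h' n (by omega)

end IsAutomatic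

theorem isAutomatic_of_digit_rec_mod {S : Type} [Finite S] (hk : 1 < k) (T : ℕ) [NeZero T]
    (s : ℕ → S) (G : ZMod T → ℕ → S → S)
    (hs : ∀ n ≠ 0, s n = G ((n / k : ℕ) : ZMod T) (n % k) (s (n / k))) :
    IsAutomatic k s := by
  have hpair : IsAutomatic k (fun n => ((n : ZMod T), s n)) := by
    refine isAutomatic_of_digit_rec hk _ (fun x d => (x.1 * k + d.val, G x.1 d.val x.2))
      fun n hn => ?_
    rw [hs n hn]
    congr
    conv_lhs => rw [← Nat.div_add_mod' n k]
    push_cast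
    rfl
  exact hpair.map Prod.snd

end Automata

theorem Function.Periodic.prod_range_add {M : Type*} [CommMonoid M] {f : ℕ → M} {c : ℕ}
    (hf : Function.Periodic f c) (n : ℕ) :
    ∏ j ∈ range (n + c), f j = (∏ j ∈ range n, f j) * ∏ j ∈ range c, f j := by
  induction n with
  | zero => simp
  | succ n ih =>
    rw [show n + 1 + c = n + c + 1 by omega, prod_range_succ, ih, prod_range_succ, hf n,
      mul_right_comm]

theorem Function.Periodic.prod_range_add_mul {M : Type*} [CommMonoid M] {f : ℕ → M} {c : ℕ}
    (hf : Function.Periodic f c) (n m : ℕ) :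
    ∏ j ∈ range (n + c * m), f j = (∏ j ∈ range n, f j) * (∏ j ∈ range c, f j) ^ m := by
  induction m with
  | zero => simp
  | succ m ih => rw [mul_add_one, ← add_assoc, hf.prod_range_add, ih, pow_succ, mul_assoc]

theorem Function.Periodic.prod_range_periodic {M : Type*} [CommMonoid M] {f : ℕ → M} {c e : ℕ}
    (hf : Function.Periodic f c) (he : (∏ j ∈ range c, f j) ^ e = 1) :
    Function.Periodic (fun n => ∏ j ∈ range n, f j) (c * e) := fun n => by
  simp only [hf.prod_range_add_mul, he, mul_one]

def coprimeFactorial (p n : ℕ) : ℕ := ∏ j ∈ range n, if p ∣ j + 1 then 1 else j + 1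

theorem coprimeFactorial_succ (p n : ℕ) :
    coprimeFactorial p (n + 1) = coprimeFactorial p n * if p ∣ n + 1 then 1 else n + 1 :=
  prod_range_succ _ n

theorem factorial_eq_coprimeFactorial_mul (p n : ℕ) :
    n ! = coprimeFactorial p n * p ^ (n / p) * (n / p)! := by
  induction n with
  | zero => simp [coprimeFactorial]
  | succ n ih =>
    rw [factorial_succ, ih, coprimeFactorial_succ]
    split_ifs with h
    · have hq : n + 1 = p * (n / p + 1) := by
        rw [← succ_div_of_dvd h, Nat.mul_div_cancel' h]
      rw [succ_div_of_dvd h, pow_succ, factorial_succ, hq]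
      ring
    · rw [succ_div_of_not_dvd h]
      ring

theorem not_dvd_coprimeFactorial {p : ℕ} (hp : p.Prime) (n : ℕ) : ¬ p ∣ coprimeFactorial p n := by
  rw [coprimeFactorial, hp.prime.dvd_finsetProd_iff]
  rintro ⟨j, -, hj⟩
  split_ifs at hj with h
  · exact hp.not_dvd_one hj
  · exact h hj

theorem ordCompl_factorial {p : ℕ} (hp : p.Prime) (n : ℕ) :
    ordCompl[p] n ! = coprimeFactorial p n * ordCompl[p] (n / p)! := by
  conv_lhs => rw [factorial_eq_coprimeFactorial_mul p n]
  rw [ordCompl_mul, ordCompl_mul, ordCompl_self_pow hp, mul_one,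
    (ordCompl_eq_self_iff_zero_or_not_dvd _ hp).mpr (Or.inr (not_dvd_coprimeFactorial hp n))]

theorem natCast_coprimeFactorial_pow_totient {p : ℕ} (hp : p.Prime) (α : ℕ) :
    (coprimeFactorial p (p ^ α) : ZMod (p ^ α)) ^ φ (p ^ α) = 1 := by
  have hcop : (coprimeFactorial p (p ^ α)).Coprime (p ^ α) :=
    ((hp.coprime_iff_not_dvd.mpr (not_dvd_coprimeFactorial hp _)).symm).pow_right α
  rw [← ZMod.coe_unitOfCoprime _ hcop, ← Units.val_pow_eq_pow_val, ZMod.pow_totient,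
    Units.val_one]

theorem coprimeFactorial_periodic {p α : ℕ} (hp : p.Prime) (hα : 0 < α) :
    Function.Periodic (fun n => (coprimeFactorial p n : ZMod (p ^ α))) (p ^ α * φ (p ^ α)) := by
  set g : ℕ → ZMod (p ^ α) := fun j => if p ∣ j + 1 then 1 else ((j + 1 : ℕ) : ZMod (p ^ α))
  have hcast : ∀ n, (coprimeFactorial p n : ZMod (p ^ α)) = ∏ j ∈ range n, g j := fun n => by
    simp only [coprimeFactorial, Nat.cast_prod, Nat.cast_ite, Nat.cast_one, g]
  have hg : Function.Periodic g (p ^ α) := fun j => by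
    have hpq : p ∣ p ^ α := dvd_pow_self p hα.ne'
    simp only [g, show j + p ^ α + 1 = j + 1 + p ^ α by ring, Nat.dvd_add_left hpq,
      Nat.cast_add (j + 1), ZMod.natCast_self, add_zero]
  simp only [hcast]
  exact hg.prod_range_periodic (by rw [← hcast, natCast_coprimeFactorial_pow_totient hp])

theorem isAutomatic_padicValNat_factorial {p : ℕ} (hp : p.Prime) (T : ℕ) [NeZero T] :
    IsAutomatic p (fun n => (padicValNat p n ! : ZMod T)) := by
  have : Fact p.Prime := ⟨hp⟩
  refine isAutomatic_of_digit_rec_mod hp.one_lt T _ (fun x _ v => x + v) fun n _ => ?_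
  rw [← padicValNat_mul_div_factorial, padicValNat_factorial_mul, Nat.cast_add, add_comm]

theorem isAutomatic_ordCompl_factorial {p α : ℕ} (hp : p.Prime) (hα : 0 < α) :
    IsAutomatic p (fun n => (ordCompl[p] n ! : ZMod (p ^ α))) := by
  have hq : 0 < p ^ α := pow_pos hp.pos α
  have : NeZero (p ^ α) := ⟨hq.ne'⟩
  have : NeZero (p ^ α * φ (p ^ α)) := ⟨(Nat.mul_pos hq (totient_pos.mpr hq)).ne'⟩
  refine isAutomatic_of_digit_rec_mod hp.one_lt (p ^ α * φ (p ^ α)) _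
    (fun x d u => (coprimeFactorial p (x * p + d).val : ZMod (p ^ α)) * u) fun n _ => ?_
  have hn : (((n / p : ℕ) : ZMod (p ^ α * φ (p ^ α))) * p + (n % p : ℕ)) = n := by
    rw [← Nat.cast_mul, ← Nat.cast_add, Nat.div_add_mod' n p]
  rw [ordCompl_factorial hp, Nat.cast_mul, hn, ZMod.val_natCast,
    (coprimeFactorial_periodic hp hα).map_mod_nat]

theorem lnz_mul_eq_chineseRemainder {q c m t : ℕ} (hqc : q.Coprime c)
    (hdvd : (q * c) ^ t * c ∣ m) (hndvd : ¬ (q * c) ^ (t + 1) ∣ m) :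
    lnz (q * c) m = ((ZMod.chineseRemainder hqc).symm ((m / (q * c) ^ t : ℕ), 0)).val := by
  have hm : m ≠ 0 := by rintro rfl; exact hndvd (dvd_zero _)
  have hb : q * c ≠ 1 := fun h => hndvd (by rw [h, one_pow]; exact one_dvd m)
  have hval : padicValNat (q * c) m = t := by
    refine le_antisymm (not_lt.mp fun h => hndvd ?_) ?_
    · exact (padicValNat_dvd_iff_le_of_ne_one hb hm).mpr h
    · exact (padicValNat_dvd_iff_le_of_ne_one hb hm).mp (dvd_of_mul_right_dvd hdvd)
  have hc : ((m / (q * c) ^ t : ℕ) : ZMod c) = 0 :=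
    (ZMod.natCast_eq_zero_iff _ c).mpr (Nat.dvd_div_of_mul_dvd hdvd)
  rw [lnz, hval, ← ZMod.val_natCast, ← map_natCast (ZMod.chineseRemainder hqc).symm, ← hc]
  rfl

theorem pow_mul_dvd_of_pow_succ_dvd {p α c m : ℕ} (hp : p.Prime) (hcp : c.Coprime p)
    (hm : m ≠ 0) (hcm : c ^ (padicValNat p m / α + 1) ∣ m) :
    (p ^ α * c) ^ (padicValNat p m / α) * c ∣ m := by
  have : Fact p.Prime := ⟨hp⟩
  rw [mul_pow, mul_assoc, ← pow_succ, ← pow_mul]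
  exact (Nat.Coprime.pow _ _ hcp.symm).mul_dvd_of_dvd_of_dvd
    ((padicValNat_dvd_iff_le hm).mpr (Nat.mul_div_le _ _)) hcm

theorem not_pow_mul_pow_succ_dvd {p α m : ℕ} (c : ℕ) (hp : p.Prime) (hα : 0 < α) (hm : m ≠ 0) :
    ¬ (p ^ α * c) ^ (padicValNat p m / α + 1) ∣ m := fun h => by
  have : Fact p.Prime := ⟨hp⟩
  have hpow : p ^ (α * (padicValNat p m / α + 1)) ∣ m := by
    rw [pow_mul]
    exact (pow_dvd_pow_of_dvd (dvd_mul_right _ c) _).trans h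
  exact (Nat.lt_mul_div_succ _ hα).not_ge ((padicValNat_dvd_iff_le hm).mp hpow)

theorem pow_mul_div_pow_eq {p α c m : ℕ} (hp : p.Prime)
    (hdvd : (p ^ α * c) ^ (padicValNat p m / α) ∣ m) :
    c ^ (padicValNat p m / α) * (m / (p ^ α * c) ^ (padicValNat p m / α)) =
      p ^ (padicValNat p m % α) * ordCompl[p] m := by
  refine Nat.eq_of_mul_eq_mul_left (pow_pos hp.pos (α * (padicValNat p m / α))) ?_
  rw [← mul_assoc, pow_mul, ← mul_pow, Nat.mul_div_cancel' hdvd, ← mul_assoc, ← pow_mul, ← pow_add,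
    Nat.div_add_mod, ← Nat.factorization_def m hp, Nat.ordProj_mul_ordCompl_eq_self]

theorem periodic_pow_div_mul_pow_mod {M : Type*} [Monoid M] {x : M} {e : ℕ} (hx : x ^ e = 1)
    (y : M) (α : ℕ) : Function.Periodic (fun v => x ^ (v / α) * y ^ (v % α)) (α * e) := by
  rcases α.eq_zero_or_pos with rfl | hα
  · simp
  · intro v
    simp only [Nat.add_mul_div_left _ _ hα, Nat.add_mul_mod_self_left, pow_add, hx, mul_one]

/-- The residue modulo `p ^ α * c` which is `0` modulo `c` and `c⁻¹ ^ (v / α) * p ^ (v % α) * u`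
modulo `p ^ α`. -/
def lnzOfParts (p α c : ℕ) (hqc : (p ^ α).Coprime c) (v : ℕ) (u : ZMod (p ^ α)) : ℕ :=
  ((ZMod.chineseRemainder hqc).symm
    ((((ZMod.unitOfCoprime c hqc.symm)⁻¹ : (ZMod (p ^ α))ˣ) : ZMod (p ^ α)) ^ (v / α) *
      (p : ZMod (p ^ α)) ^ (v % α) * u, 0)).val

theorem lnzOfParts_periodic (p α c : ℕ) (hqc : (p ^ α).Coprime c) (u : ZMod (p ^ α)) :
    Function.Periodic (fun v => lnzOfParts p α c hqc v u) (α * φ (p ^ α)) := fun v => by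
  have hx : (((ZMod.unitOfCoprime c hqc.symm)⁻¹ : (ZMod (p ^ α))ˣ) : ZMod (p ^ α)) ^ φ (p ^ α) =
      1 := by
    rw [← Units.val_pow_eq_pow_val, ZMod.pow_totient, Units.val_one]
  simp only [lnzOfParts, periodic_pow_div_mul_pow_mod hx _ α v]

theorem lnz_eq_lnzOfParts {p α c m : ℕ} (hp : p.Prime) (hα : 0 < α) (hqc : (p ^ α).Coprime c)
    (hm : m ≠ 0) (hcm : c ^ (padicValNat p m / α + 1) ∣ m) :
    lnz (p ^ α * c) m = lnzOfParts p α c hqc (padicValNat p m) (ordCompl[p] m) := by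
  have hcp : c.Coprime p := (Nat.Coprime.coprime_dvd_left (dvd_pow_self p hα.ne') hqc).symm
  have hdvd := pow_mul_dvd_of_pow_succ_dvd hp hcp hm hcm
  have key := congrArg (Nat.cast : ℕ → ZMod (p ^ α))
    (pow_mul_div_pow_eq hp (dvd_of_mul_right_dvd hdvd))
  push_cast at key
  rw [lnz_mul_eq_chineseRemainder hqc hdvd (not_pow_mul_pow_succ_dvd c hp hα hm), lnzOfParts,
    mul_assoc, ← key, ← mul_assoc, ← mul_pow, ← ZMod.coe_unitOfCoprime c hqc.symm, ← Units.val_mul,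
    inv_mul_cancel, Units.val_one, one_pow, one_mul]

open Filter Asymptotics in
theorem isLittleO_digits_sum {p : ℕ} (hp : 1 < p) :
    (fun n : ℕ => ((p.digits n).sum : ℝ)) =o[atTop] (fun n => (n : ℝ)) := by
  have hbound : ∀ n : ℕ, ((p.digits n).sum : ℝ) ≤ (p - 1) * (Real.logb p n + 1) := fun n => by
    have hsum : (p.digits n).sum ≤ (p.digits n).length * (p - 1) :=
      List.sum_le_card_nsmul _ _ fun d hd => Nat.le_sub_one_of_lt (Nat.digits_lt_base hp hd)
    have hlen : ((p.digits n).length : ℝ) ≤ Real.logb p n + 1 := by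
      rcases eq_or_ne n 0 with rfl | hn
      · simp
      · rw [Nat.length_digits p n hp hn]
        push_cast
        linarith [Real.natLog_le_logb n p]
    calc ((p.digits n).sum : ℝ) ≤ (p.digits n).length * (p - 1 : ℕ) := by exact_mod_cast hsum
      _ ≤ (Real.logb p n + 1) * (p - 1) := by
        rw [Nat.cast_sub hp.le, Nat.cast_one]
        have : (1 : ℝ) ≤ p := by exact_mod_cast hp.le
        exact mul_le_mul_of_nonneg_right hlen (sub_nonneg.mpr this)
      _ = _ := mul_comm _ _
  have hlog : (fun x : ℝ => (p - 1) * (Real.logb p x + 1)) =o[atTop] id :=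
    ((Real.isLittleO_log_id_atTop.const_mul_left (1 / Real.log p)).add
      (isLittleO_const_id_atTop 1)).const_mul_left ((p : ℝ) - 1) |>.congr_left fun x => by
        rw [Real.logb]; ring
  refine (IsBigO.of_bound 1 (Eventually.of_forall fun n => ?_)).trans_isLittleO
    (hlog.comp_tendsto tendsto_natCast_atTop_atTop)
  rw [Function.comp_apply, one_mul, Real.norm_eq_abs, Real.norm_eq_abs,
    abs_of_nonneg (by positivity)]
  exact (hbound n).trans (le_abs_self _)

open Filter in
theorem eventually_pow_dvd_factorial {p₀ a₀ p a : ℕ} (hp₀ : p₀.Prime) (hp : p.Prime)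
    (hlt : a * (p - 1) < a₀ * (p₀ - 1)) :
    ∀ᶠ n in atTop, p ^ (a * (padicValNat p₀ n ! / a₀ + 1)) ∣ n ! := by
  have : Fact p₀.Prime := ⟨hp₀⟩
  have : Fact p.Prime := ⟨hp⟩
  set A := a₀ * (p₀ - 1)
  set B := a * (p - 1)
  have hA : (0 : ℝ) < A := by exact_mod_cast (Nat.zero_le _).trans_lt hlt
  have hε : (0 : ℝ) < 1 - B / A := by rw [sub_pos, div_lt_one hA]; exact_mod_cast hlt
  have hsmall := ((isLittleO_digits_sum hp.one_lt).add
    ((Asymptotics.isLittleO_const_id_atTop (B : ℝ)).comp_tendsto tendsto_natCast_atTop_atTop)).bound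
      hε
  filter_upwards [hsmall] with n hn
  rw [Function.comp_apply, Real.norm_of_nonneg (by positivity),
    Real.norm_of_nonneg (by positivity)] at hn
  set t := padicValNat p₀ n ! / a₀
  have hAt : A * t ≤ n := calc
    A * t = (p₀ - 1) * (a₀ * t) := by ring
    _ ≤ (p₀ - 1) * padicValNat p₀ n ! := Nat.mul_le_mul_left _ (Nat.mul_div_le _ _)
    _ ≤ n := sub_one_mul_padicValNat_factorial (p := p₀) n ▸ Nat.sub_le _ _
  have hBt : (B : ℝ) * t ≤ B / A * n := calc
    (B : ℝ) * t = B / A * (A * t) := by field_simp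
    _ ≤ B / A * n := by gcongr; exact_mod_cast hAt
  have hdigits : B * t + B ≤ n - (p.digits n).sum := by
    rw [← Nat.cast_le (α := ℝ), Nat.cast_sub (digit_sum_le p n), Nat.cast_add, Nat.cast_mul]
    linarith
  rw [padicValNat_dvd_iff_le (factorial_ne_zero n)]
  refine Nat.le_of_mul_le_mul_left ?_ (Nat.sub_pos_of_lt hp.one_lt)
  rw [sub_one_mul_padicValNat_factorial]
  calc (p - 1) * (a * (t + 1)) = B * t + B := by ring
    _ ≤ _ := hdigits

open Function in
theorem Nat.prod_dvd_of_coprime {ι : Type*} {s : Finset ι} {f : ι → ℕ} {m : ℕ}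
    (hs : (s : Set ι).Pairwise (Nat.Coprime on f)) (hf : ∀ i ∈ s, f i ∣ m) :
    ∏ i ∈ s, f i ∣ m := by
  rw [← Int.natCast_dvd_natCast, Nat.cast_prod]
  exact Finset.prod_dvd_of_coprime (hs.mono' fun i j h => Nat.isCoprime_iff_coprime.mpr h)
    fun i hi => Int.natCast_dvd_natCast.mpr (hf i hi)

open Filter in
theorem eventually_prod_pow_dvd_factorial {ι : Type*} (s : Finset ι) {p a : ι → ℕ}
    (hp : ∀ i ∈ s, (p i).Prime) (hinj : Set.InjOn p s) {p₀ a₀ : ℕ} (hp₀ : p₀.Prime)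
    (hlt : ∀ i ∈ s, a i * (p i - 1) < a₀ * (p₀ - 1)) :
    ∀ᶠ n in atTop, (∏ i ∈ s, p i ^ a i) ^ (padicValNat p₀ n ! / a₀ + 1) ∣ n ! := by
  filter_upwards [(eventually_all_finset s).mpr fun i hi =>
    eventually_pow_dvd_factorial hp₀ (hp i hi) (hlt i hi)] with n hn
  rw [← prod_pow]
  refine Nat.prod_dvd_of_coprime (fun i hi j hj hij => ?_) fun i hi => by
    rw [← pow_mul]; exact hn i hi
  simp only [Function.onFun, ← pow_mul]
  exact coprime_pow_primes _ _ (hp i hi) (hp j hj) fun h => hij (hinj hi hj h)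

/-- Let `b = p 0 ^ a 0 * p 1 ^ a 1 * ⋯ * p (r-1) ^ a (r-1)` with `r ≥ 2`
distinct primes, ordered so that `a 0 * (p 0 - 1) > a i * (p i - 1)` for all
`i ≠ 0`.  Then the sequence of last nonzero digits of `n !` in base `b` is
`p 0`-automatic. -/
theorem lnz_factorial_automatic_of_strict_max (b r : ℕ) (hr : 2 ≤ r)
    (p a : Fin r → ℕ) (hp : ∀ i, (p i).Prime) (hpinj : Function.Injective p)
    (ha : ∀ i, 0 < a i) (hfac : b = ∏ i, p i ^ a i)
    (hmax : ∀ i : Fin r, i ≠ ⟨0, by omega⟩ →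
      a i * (p i - 1) < a ⟨0, by omega⟩ * (p ⟨0, by omega⟩ - 1)) :
    IsAutomatic (p ⟨0, by omega⟩) (fun n => lnz b (Nat.factorial n)) := by
  set i₀ : Fin r := ⟨0, by omega⟩
  have hp₀ := hp i₀
  set c := ∏ i ∈ univ.erase i₀, p i ^ a i
  have hbqc : b = p i₀ ^ a i₀ * c := hfac.trans (mul_prod_erase _ _ (mem_univ i₀)).symm
  have hqc : (p i₀ ^ a i₀).Coprime c := Nat.Coprime.prod_right fun i hi =>
    coprime_pow_primes _ _ hp₀ (hp i) fun h => (mem_erase.mp hi).1 (hpinj h).symm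
  obtain ⟨N, hN⟩ := Filter.eventually_atTop.mp <| eventually_prod_pow_dvd_factorial (univ.erase i₀)
    (fun i _ => hp i) hpinj.injOn hp₀ fun i hi => hmax i (mem_erase.mp hi).1
  have : NeZero (a i₀ * φ (p i₀ ^ a i₀)) :=
    ⟨(Nat.mul_pos (ha i₀) (totient_pos.mpr (pow_pos hp₀.pos _))).ne'⟩
  rw [hbqc]
  refine (((isAutomatic_padicValNat_factorial hp₀ (a i₀ * φ (p i₀ ^ a i₀))).prodMk hp₀.one_lt
    (isAutomatic_ordCompl_factorial hp₀ (ha i₀))).map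
      fun x => lnzOfParts _ _ _ hqc x.1.val x.2).congr_of_ge hp₀.one_lt N fun n hn => ?_
  rw [lnz_eq_lnzOfParts hp₀ (ha i₀) hqc (factorial_ne_zero n) (hN n hn), ZMod.val_natCast,
    (lnzOfParts_periodic _ _ _ hqc _).map_mod_nat]
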